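/- arXiv:1111.0765 — 11 statements merged into one kernel-verified Lean document; each statement's English description precedes it below -/
import Mathlib

section
/- Let (X,d) be a compact metric space and f : X → X continuous. If Λ ⊆ X is a closed, internally chain transitive set, then Λ is invariant, i.e. f(Λ) = Λ. -/
def InternallyChainTransitive {X : Type*} [MetricSpace X] (f : X → X) (Λ : Set X) : Prop :=
  ∀ x ∈ Λ, ∀ y ∈ Λ, ∀ ε : ℝ, 0 < ε → ∃ m : ℕ, 1 ≤ m ∧ ∃ σ : ℕ → X,
    σ 0 = x ∧ σ m = y ∧ (∀ i ≤ m, σ i ∈ Λ) ∧ ∀ i < m, dist (f (σ i)) (σ (i + 1)) < ε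

theorem ict_closed_invariant {X : Type*} [MetricSpace X] [CompactSpace X]
    (f : X → X) (hf : Continuous f) (Λ : Set X) (hΛc : IsClosed Λ)
    (hict : InternallyChainTransitive f Λ) : f '' Λ = Λ := by
  apply Set.Subset.antisymm
  · rintro _ ⟨x, hx, rfl⟩
    have hcl : f x ∈ closure Λ := by
      rw [Metric.mem_closure_iff]
      intro ε hε
      obtain ⟨m, hm, σ, h0, hmx, hmem, hd⟩ := hict x hx x hx ε hε
      refine ⟨σ 1, hmem 1 hm, ?_⟩
      have := hd 0 hm
      rwa [h0] at this
    rwa [hΛc.closure_eq] at hcl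
  · intro y hy
    have hc : IsClosed (f '' Λ) := (hΛc.isCompact.image hf).isClosed
    have hcl : y ∈ closure (f '' Λ) := by
      rw [Metric.mem_closure_iff]
      intro ε hε
      obtain ⟨m, hm, σ, h0, hmy, hmem, hd⟩ := hict y hy y hy ε hε
      refine ⟨f (σ (m - 1)), ⟨σ (m - 1), hmem (m - 1) (Nat.sub_le _ _), rfl⟩, ?_⟩
      have h := hd (m - 1) (Nat.sub_lt hm Nat.one_pos)
      rw [Nat.sub_add_cancel hm, hmy] at h
      rwa [dist_comm] at h
    rwa [hc.closure_eq] at hcl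
end

section
/- Let (X,d) be a compact metric space, f : X → X continuous, and Λ a closed nonempty subset of X. If Λ is internally chain transitive, then Λ is weakly incompressible. -/
def WeaklyIncompressible {X : Type*} [MetricSpace X] (f : X → X) (Λ : Set X) : Prop :=
  ∀ M : Set X, M ⊆ Λ → M.Nonempty → IsClosed M → M ≠ Λ →
    (M ∩ closure (f '' (Λ \ M))).Nonempty

theorem ict_implies_wi {X : Type*} [MetricSpace X] [CompactSpace X]
    (f : X → X) (hf : Continuous f) (Λ : Set X) (hΛc : IsClosed Λ)
    (hne : Λ.Nonempty) (hict : InternallyChainTransitive f Λ) :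
    WeaklyIncompressible f Λ := by
  classical
  intro M hMΛ hMne hMcl hMneq
  by_contra h
  rw [Set.not_nonempty_iff_eq_empty] at h
  set K := closure (f '' (Λ \ M)) with hK
  have hdisj : Disjoint M K := Set.disjoint_iff_inter_eq_empty.mpr h
  obtain ⟨δ, hδ, hthick⟩ := hdisj.exists_thickenings hMcl.isCompact isClosed_closure
  have hns : ¬ Λ ⊆ M := fun hsub => hMneq (le_antisymm hMΛ hsub)
  obtain ⟨x, hxΛ, hxM⟩ := Set.not_subset.mp hns
  obtain ⟨y, hyM⟩ := hMne
  obtain ⟨m, hm1, σ, hσ0, hσm, hσΛ, hσd⟩ := hict x hxΛ y (hMΛ hyM) δ hδ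
  have hex : ∃ i, σ i ∈ M := ⟨m, hσm ▸ hyM⟩
  set i := Nat.find hex with hi
  have hiM : σ i ∈ M := Nat.find_spec hex
  have him : i ≤ m := Nat.find_le (hσm ▸ hyM)
  have hipos : 1 ≤ i := by
    by_contra hc
    push_neg at hc
    interval_cases i
    exact hxM (hσ0 ▸ hiM)
  have hprevM : σ (i - 1) ∉ M := Nat.find_min hex (by omega)
  have hprevΛ : σ (i - 1) ∈ Λ := hσΛ _ (by omega)
  have hdist : dist (f (σ (i - 1))) (σ (i - 1 + 1)) < δ := hσd _ (by omega)
  rw [show i - 1 + 1 = i by omega] at hdist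
  have hfK : f (σ (i - 1)) ∈ K := subset_closure ⟨σ (i - 1), ⟨hprevΛ, hprevM⟩, rfl⟩
  have h1 : σ i ∈ Metric.thickening δ M := Metric.self_subset_thickening hδ M hiM
  have h2 : σ i ∈ Metric.thickening δ K :=
    Metric.mem_thickening_iff.mpr ⟨_, hfK, by rwa [dist_comm]⟩
  exact hthick.ne_of_mem h1 h2 rfl
end

section
/- Let (X,d) be a compact metric space and f : X → X continuous. For every x ∈ X, the ω-limit set ω(x,f) is internally chain transitive. -/
def omegaLimitSet {X : Type*} [MetricSpace X] (f : X → X) (x : X) : Set X :=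
  ⋂ k : ℕ, closure ((fun n => f^[n] x) '' Set.Ici k)

open Filter Set Metric

section

variable {X : Type*} [MetricSpace X]

theorem mem_omegaLimitSet_iff_mapClusterPt {f : X → X} {x y : X} :
    y ∈ omegaLimitSet f x ↔ MapClusterPt y atTop (fun n => f^[n] x) := by
  simp [omegaLimitSet, mapClusterPt_atTop_iff_forall_mem_closure]

theorem omegaLimitSet_eq_omegaLimit (f : X → X) (x : X) :
    omegaLimitSet f x = omegaLimit atTop (fun n a => f^[n] a) {x} := by
  ext y
  rw [mem_omegaLimit_singleton_iff_mapClusterPt, mem_omegaLimitSet_iff_mapClusterPt]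

theorem frequently_dist_iterate_lt {f : X → X} {x a : X} (ha : a ∈ omegaLimitSet f x) {δ : ℝ}
    (hδ : 0 < δ) : ∃ᶠ n in atTop, dist (f^[n] x) a < δ :=
  mapClusterPt_iff_frequently.mp (mem_omegaLimitSet_iff_mapClusterPt.mp ha) _ (ball_mem_nhds a hδ)

theorem eventually_iterate_mem_thickening_omegaLimitSet [CompactSpace X] (f : X → X) (x : X)
    {δ : ℝ} (hδ : 0 < δ) : ∀ᶠ n in atTop, f^[n] x ∈ thickening δ (omegaLimitSet f x) := by
  have hω : omegaLimit atTop (fun n a => f^[n] a) {x} ⊆ thickening δ (omegaLimitSet f x) :=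
    omegaLimitSet_eq_omegaLimit f x ▸ self_subset_thickening hδ _
  exact (eventually_mapsTo_of_isOpen_of_omegaLimit_subset _ _ _ isOpen_thickening hω).mono
    fun _ hn => hn rfl

theorem exists_seq_mem_dist_lt_of_mem_thickening {Λ : Set X} {δ : ℝ} {y : ℕ → X}
    (hy : ∀ i, y i ∈ thickening δ Λ) {a b : X} (ha : a ∈ Λ) (hb : b ∈ Λ) {m : ℕ} (hm : m ≠ 0)
    (hya : dist (y 0) a < δ) (hyb : dist (y m) b < δ) :
    ∃ σ : ℕ → X, σ 0 = a ∧ σ m = b ∧ ∀ i ≤ m, σ i ∈ Λ ∧ dist (y i) (σ i) < δ := by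
  choose g hgΛ hg using fun i => mem_thickening_iff.mp (hy i)
  refine ⟨fun i => if i = 0 then a else if i = m then b else g i, if_pos rfl, by simp [hm],
    fun i _ => ?_⟩
  dsimp only
  split_ifs with h0 hm'
  · exact h0 ▸ ⟨ha, hya⟩
  · exact hm' ▸ ⟨hb, hyb⟩
  · exact ⟨hgΛ i, hg i⟩

theorem dist_apply_lt_of_dist_orbit_lt {f : X → X} {ε δ : ℝ} (hδε : δ ≤ ε / 2)
    (hfδ : ∀ p q, dist p q < δ → dist (f p) (f q) < ε / 2) {y σ : ℕ → X}
    (hy : ∀ i, y (i + 1) = f (y i)) {m : ℕ} (hσ : ∀ i ≤ m, dist (y i) (σ i) < δ) {i : ℕ}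
    (hi : i < m) : dist (f (σ i)) (σ (i + 1)) < ε :=
  calc dist (f (σ i)) (σ (i + 1))
      ≤ dist (f (σ i)) (f (y i)) + dist (y (i + 1)) (σ (i + 1)) := hy i ▸ dist_triangle _ _ _
    _ < ε / 2 + δ :=
        add_lt_add (hfδ _ _ (dist_comm (y i) (σ i) ▸ hσ i hi.le)) (hσ (i + 1) hi)
    _ ≤ ε := by linarith

end

theorem omegaLimitSet_ict {X : Type*} [MetricSpace X] [CompactSpace X]
    (f : X → X) (hf : Continuous f) (x : X) :
    InternallyChainTransitive f (omegaLimitSet f x) := by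
  intro a ha b hb ε hε
  obtain ⟨δ₀, hδ₀, hfδ₀⟩ := Metric.uniformContinuous_iff.mp
    (CompactSpace.uniformContinuous_of_continuous hf) (ε / 2) (half_pos hε)
  have hδ : 0 < min δ₀ (ε / 2) := lt_min hδ₀ (half_pos hε)
  have hfδ : ∀ p q, dist p q < min δ₀ (ε / 2) → dist (f p) (f q) < ε / 2 :=
    fun _ _ h => hfδ₀ (h.trans_le (min_le_left _ _))
  obtain ⟨K, hK⟩ := eventually_atTop.mp (eventually_iterate_mem_thickening_omegaLimitSet f x hδ)
  obtain ⟨n, hn, hna⟩ := frequently_atTop.mp (frequently_dist_iterate_lt ha hδ) K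
  obtain ⟨N, hN, hNb⟩ := frequently_atTop.mp (frequently_dist_iterate_lt hb hδ) (n + 1)
  obtain ⟨m, rfl⟩ : ∃ m, N = n + m := ⟨N - n, by omega⟩
  obtain ⟨σ, hσa, hσb, hσ⟩ := exists_seq_mem_dist_lt_of_mem_thickening
    (y := fun i => f^[n + i] x) (fun i => hK _ (by omega)) ha hb (by omega) hna hNb
  exact ⟨m, by omega, σ, hσa, hσb, fun i hi => (hσ i hi).1, fun i hi =>
    dist_apply_lt_of_dist_orbit_lt (min_le_right _ _) hfδ
      (fun i => Function.iterate_succ_apply' f (n + i) x) (fun i hi => (hσ i hi).2) hi⟩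
end

section
/- Let (X,d) be a compact metric space and f : X → X continuous. If Λ ⊆ X satisfies Λ ⊆ f(Λ) and f has s-limit shadowing on Λ, then f has limit shadowing on Λ. -/
open Filter Topology

def SLimitShadowingOn {X : Type*} [MetricSpace X] (f : X → X) (Λ : Set X) : Prop :=
  ∀ ε : ℝ, 0 < ε → ∃ δ : ℝ, 0 < δ ∧
    (∀ σ : ℕ → X, (∀ n, σ n ∈ Λ) → (∀ n, dist (f (σ n)) (σ (n + 1)) < δ) →
      ∃ y : X, ∀ n, dist (f^[n] y) (σ n) < ε) ∧
    (∀ σ : ℕ → X, (∀ n, σ n ∈ Λ) → (∀ n, dist (f (σ n)) (σ (n + 1)) < δ) →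
      Tendsto (fun n => dist (f (σ n)) (σ (n + 1))) atTop (𝓝 0) →
      ∃ y : X, (∀ n, dist (f^[n] y) (σ n) < ε) ∧
        Tendsto (fun n => dist (f^[n] y) (σ n)) atTop (𝓝 0))

def LimitShadowingOn {X : Type*} [MetricSpace X] (f : X → X) (Λ : Set X) : Prop :=
  ∀ σ : ℕ → X, (∀ n, σ n ∈ Λ) →
    Tendsto (fun n => dist (f (σ n)) (σ (n + 1))) atTop (𝓝 0) →
    ∃ y : X, Tendsto (fun n => dist (f^[n] y) (σ n)) atTop (𝓝 0)

theorem sLimitShadowing_implies_limitShadowing {X : Type*} [MetricSpace X] [CompactSpace X]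
    (f : X → X) (hf : Continuous f) (Λ : Set X) (hΛ : Λ ⊆ f '' Λ)
    (hsls : SLimitShadowingOn f Λ) : LimitShadowingOn f Λ := by
  intro σ hσΛ htend
  obtain ⟨δ, hδ, _, h2⟩ := hsls 1 one_pos
  -- tail of errors < δ
  obtain ⟨N, hN⟩ := (Metric.tendsto_atTop.mp htend δ hδ)
  simp only [Real.dist_eq, sub_zero] at hN
  have hN' : ∀ n ≥ N, dist (f (σ n)) (σ (n + 1)) < δ := by
    intro n hn
    have := hN n hn
    rwa [abs_of_nonneg dist_nonneg] at this
  -- backward orbit through Λ from σ N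
  set F : Λ → Λ := fun x => ⟨(hΛ x.2).choose, (hΛ x.2).choose_spec.1⟩ with hF
  have hFf : ∀ x : Λ, f (F x : X) = (x : X) := fun x => (hΛ x.2).choose_spec.2
  set b : ℕ → X := fun k => (F^[k] ⟨σ N, hσΛ N⟩ : Λ) with hb
  have hb0 : b 0 = σ N := rfl
  have hbΛ : ∀ k, b k ∈ Λ := fun k => (F^[k] ⟨σ N, hσΛ N⟩).2
  have hbf : ∀ k, f (b (k + 1)) = b k := by
    intro k
    simp only [hb, Function.iterate_succ_apply']
    exact hFf _
  -- new pseudo-orbit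
  set τ : ℕ → X := fun n => if n < N then b (N - n) else σ n with hτ
  have hτeq : ∀ n ≥ N, τ n = σ n := by
    intro n hn
    simp [hτ, Nat.not_lt.mpr hn]
  have hτΛ : ∀ n, τ n ∈ Λ := by
    intro n
    by_cases h : n < N
    · simpa [hτ, h] using hbΛ (N - n)
    · simpa [hτ, h] using hσΛ n
  have hτval : ∀ n, n < N → τ (n + 1) = b (N - (n + 1)) := by
    intro n hn
    by_cases h : n + 1 < N
    · simp [hτ, h]
    · have hEq : n + 1 = N := le_antisymm (Nat.succ_le_of_lt hn) (Nat.not_lt.mp h)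
      simp [hτ, h, hEq, hb0]
  have hτδ : ∀ n, dist (f (τ n)) (τ (n + 1)) < δ := by
    intro n
    by_cases h : n < N
    · have h1 : τ n = b (N - n) := by simp [hτ, h]
      have h2 : N - n = (N - (n + 1)) + 1 := by omega
      rw [h1, hτval n h, h2, hbf]
      simpa using hδ
    · rw [hτeq n (Nat.not_lt.mp h), hτeq (n + 1) (by omega)]
      exact hN' n (Nat.not_lt.mp h)
  have hτtend : Tendsto (fun n => dist (f (τ n)) (τ (n + 1))) atTop (𝓝 0) := by
    apply htend.congr'
    filter_upwards [eventually_ge_atTop N] with n hn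
    rw [hτeq n hn, hτeq (n + 1) (by omega)]
  obtain ⟨y, _, hy⟩ := h2 τ hτΛ hτδ hτtend
  refine ⟨y, hy.congr' ?_⟩
  filter_upwards [eventually_ge_atTop N] with n hn
  rw [hτeq n hn]
end

section
/- Let (X,d) be a compact metric space and f : X → X continuous and positively expansive. Then f has shadowing if and only if f has h-shadowing. -/
def Shadowing {X : Type*} [MetricSpace X] (f : X → X) : Prop :=
  ∀ ε : ℝ, 0 < ε → ∃ δ : ℝ, 0 < δ ∧ ∀ σ : ℕ → X,
    (∀ n, dist (f (σ n)) (σ (n + 1)) < δ) →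
    ∃ y : X, ∀ n, dist (f^[n] y) (σ n) < ε

def HShadowing {X : Type*} [MetricSpace X] (f : X → X) : Prop :=
  ∀ ε : ℝ, 0 < ε → ∃ δ : ℝ, 0 < δ ∧ ∀ (m : ℕ) (σ : ℕ → X),
    (∀ i < m, dist (f (σ i)) (σ (i + 1)) < δ) →
    ∃ y : X, (∀ i < m, dist (f^[i] y) (σ i) < ε) ∧ f^[m] y = σ m

def PositivelyExpansive {X : Type*} [MetricSpace X] (f : X → X) : Prop :=
  ∃ b : ℝ, 0 < b ∧ ∀ x y : X, (∀ n : ℕ, dist (f^[n] x) (f^[n] y) < b) → x = y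

theorem shadowing_iff_hShadowing_of_posExpansive {X : Type*} [MetricSpace X] [CompactSpace X]
    (f : X → X) (hf : Continuous f) (hexp : PositivelyExpansive f) :
    Shadowing f ↔ HShadowing f := by
  obtain ⟨b, hb, hexpb⟩ := hexp
  constructor
  · intro hsh ε hε
    obtain ⟨δ, hδ, hδs⟩ := hsh (min ε b) (lt_min hε hb)
    refine ⟨δ, hδ, ?_⟩
    intro m σ hσ
    set σ' : ℕ → X := fun n => if n < m then σ n else f^[n - m] (σ m) with hσ'def
    have hσ'orbit : ∀ n, dist (f (σ' n)) (σ' (n + 1)) < δ := by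
      intro n
      by_cases h : n < m
      · have h1 : σ' n = σ n := if_pos h
        have h2 : σ' (n + 1) = σ (n + 1) := by
          by_cases h' : n + 1 < m
          · exact if_pos h'
          · have hm : n + 1 = m := by omega
            simp [σ', if_neg h', hm]
        rw [h1, h2]; exact hσ n h
      · push_neg at h
        have h1 : σ' n = f^[n - m] (σ m) := if_neg (not_lt.mpr h)
        have h2 : σ' (n + 1) = f^[n + 1 - m] (σ m) := if_neg (by omega)
        have h3 : n + 1 - m = (n - m) + 1 := by omega
        rw [h1, h2, h3, Function.iterate_succ_apply']
        simpa using hδ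
    obtain ⟨y, hy⟩ := hδs σ' hσ'orbit
    refine ⟨y, fun i hi => lt_of_lt_of_le (by simpa [σ', if_pos hi] using hy i)
      (min_le_left _ _), ?_⟩
    apply hexpb
    intro k
    have hk := hy (k + m)
    have hσ'km : σ' (k + m) = f^[k] (σ m) := by
      simp only [σ']
      rw [if_neg (by omega)]
      congr 1
      omega
    rw [hσ'km] at hk
    calc dist (f^[k] (f^[m] y)) (f^[k] (σ m))
        = dist (f^[k + m] y) (f^[k] (σ m)) := by rw [Function.iterate_add_apply]
      _ < min ε b := hk
      _ ≤ b := min_le_right _ _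
  · intro hh ε hε
    obtain ⟨δ, hδ, hδs⟩ := hh (ε / 2) (by linarith)
    refine ⟨δ, hδ, ?_⟩
    intro σ hσ
    choose y hy hy' using fun m => hδs m σ (fun i _ => hσ i)
    obtain ⟨z, _, φ, hφ, hz⟩ := isCompact_univ.tendsto_subseq (fun m => Set.mem_univ (y m))
    refine ⟨z, fun n => ?_⟩
    have hcont : Filter.Tendsto (fun k => f^[n] (y (φ k))) Filter.atTop (nhds (f^[n] z)) :=
      ((hf.iterate n).tendsto z).comp hz
    have hle : dist (f^[n] z) (σ n) ≤ ε / 2 := by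
      apply le_of_tendsto (hcont.dist tendsto_const_nhds)
      filter_upwards [Filter.eventually_ge_atTop (n + 1)] with k hk
      exact le_of_lt (hy (φ k) n (lt_of_lt_of_le hk hφ.le_apply))
    linarith
end

section
/- Let (X,d) be a compact metric space and f : X → X a continuous c-expansive surjection. If f has shadowing, then f has s-limit shadowing. -/
open Filter Topology

def CExpansive {X : Type*} [MetricSpace X] (f : X → X) : Prop :=
  ∃ b : ℝ, 0 < b ∧ ∀ x y : ℤ → X,
    (∀ n : ℤ, f (x n) = x (n + 1)) → (∀ n : ℤ, f (y n) = y (n + 1)) →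
    (∀ n : ℤ, dist (x n) (y n) < b) → x 0 = y 0

def SLimitShadowing {X : Type*} [MetricSpace X] (f : X → X) : Prop :=
  ∀ ε : ℝ, 0 < ε → ∃ δ : ℝ, 0 < δ ∧
    (∀ σ : ℕ → X, (∀ n, dist (f (σ n)) (σ (n + 1)) < δ) →
      ∃ y : X, ∀ n, dist (f^[n] y) (σ n) < ε) ∧
    (∀ σ : ℕ → X, (∀ n, dist (f (σ n)) (σ (n + 1)) < δ) →
      Tendsto (fun n => dist (f (σ n)) (σ (n + 1))) atTop (𝓝 0) →
      ∃ y : X, (∀ n, dist (f^[n] y) (σ n) < ε) ∧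
        Tendsto (fun n => dist (f^[n] y) (σ n)) atTop (𝓝 0))

/-!
Let `b` be an expansivity constant and let `y` shadow an asymptotic pseudo-orbit `σ` within
`b / 3`. A tail of `σ` is a pseudo-orbit with arbitrarily small jumps, so it is shadowed by some
`z` as tightly as we like; the forward orbits of `f^[m] y` and `z` then stay `2b/3`-close. By
compactness, expansivity is uniform: orbits that stay `c`-close for `c < b` on a long enough time
window are `η`-close in its middle (surjectivity extends forward orbits to full ones). Hence
`f^[n] y` and the orbit of `z` converge together, and so `f^[n] y` approaches `σ n`.
-/

section Orbits

variable {X : Type*} {f : X → X}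

def IsFullOrbit (f : X → X) (x : ℤ → X) : Prop :=
  ∀ n, f (x n) = x (n + 1)

theorem IsFullOrbit.comp_add_const {x : ℤ → X} (hx : IsFullOrbit f x) (m : ℤ) :
    IsFullOrbit f fun j => x (j + m) := fun n => by
  rw [hx, add_right_comm]

theorem isClosed_setOf_isFullOrbit [TopologicalSpace X] [T2Space X] (hf : Continuous f) :
    IsClosed {x : ℤ → X | IsFullOrbit f x} := by
  simp only [IsFullOrbit, Set.ofPred_forall]
  exact isClosed_iInter fun n => isClosed_eq (hf.comp (continuous_apply n)) (continuous_apply _)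

theorem exists_isFullOrbit_eq_iterate (hf : f.Surjective) (u : X) :
    ∃ x : ℤ → X, IsFullOrbit f x ∧ ∀ k : ℕ, x k = f^[k] u := by
  obtain ⟨g, hg⟩ := hf.hasRightInverse
  refine ⟨fun | .ofNat k => f^[k] u | .negSucc k => g^[k + 1] u, ?_, fun k => rfl⟩
  rintro (k | _ | k)
  · exact (f.iterate_succ_apply' k u).symm
  · exact hg u
  · show f (g^[k + 2] u) = g^[k + 1] u
    rw [g.iterate_succ_apply']
    exact hg _

end Orbits

section Expansive

variable {X : Type*} [MetricSpace X] {f : X → X} {b : ℝ}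

def IsExpansiveConstant (f : X → X) (b : ℝ) : Prop :=
  ∀ x y : ℤ → X, IsFullOrbit f x → IsFullOrbit f y →
    (∀ n, dist (x n) (y n) < b) → x 0 = y 0

theorem IsExpansiveConstant.exists_window [CompactSpace X] (hb : IsExpansiveConstant f b)
    (hf : Continuous f) {c ε : ℝ} (hcb : c < b) (hε : 0 < ε) :
    ∃ N : ℕ, ∀ x y : ℤ → X, IsFullOrbit f x → IsFullOrbit f y →
      (∀ n : ℤ, n.natAbs ≤ N → dist (x n) (y n) ≤ c) → dist (x 0) (y 0) < ε := by
  -- a limit of counterexamples for all `N` would be two full orbits that stay `c`-close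
  -- but are `ε`-apart at time `0`
  by_contra! hcon
  let t : ℕ → Set ((ℤ → X) × (ℤ → X)) := fun N =>
    {p | IsFullOrbit f p.1 ∧ IsFullOrbit f p.2 ∧
      (∀ n : ℤ, n.natAbs ≤ N → dist (p.1 n) (p.2 n) ≤ c) ∧ ε ≤ dist (p.1 0) (p.2 0)}
  have hclosed (N : ℕ) : IsClosed (t N) := by
    have hdist (n : ℤ) : Continuous fun p : (ℤ → X) × (ℤ → X) => dist (p.1 n) (p.2 n) := by
      fun_prop
    simp only [t, Set.ofPred_and]
    have hwin : IsClosed {p : (ℤ → X) × (ℤ → X) | ∀ n : ℤ, n.natAbs ≤ N →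
        dist (p.1 n) (p.2 n) ≤ c} := by
      simp only [Set.ofPred_forall]
      exact isClosed_iInter fun n => isClosed_iInter fun _ =>
        isClosed_le (hdist n) continuous_const
    exact ((isClosed_setOf_isFullOrbit hf).preimage continuous_fst).inter
      (((isClosed_setOf_isFullOrbit hf).preimage continuous_snd).inter
        (hwin.inter (isClosed_le continuous_const (hdist 0))))
  have hanti : Antitone t := fun M N hMN p ⟨hx, hy, hwin, hε⟩ =>
    ⟨hx, hy, fun n hn => hwin n (hn.trans hMN), hε⟩
  have hne (N : ℕ) : (t N).Nonempty := by
    obtain ⟨x, y, hx, hy, hwin, hdist⟩ := hcon N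
    exact ⟨(x, y), hx, hy, hwin, hdist⟩
  obtain ⟨⟨x, y⟩, hp⟩ := IsCompact.nonempty_iInter_of_directed_nonempty_isCompact_isClosed t
    hanti.directed_ge hne (fun N => (hclosed N).isCompact) hclosed
  simp only [Set.mem_iInter] at hp
  have hxy : x 0 = y 0 := hb x y (hp 0).1 (hp 0).2.1
    fun n => ((hp n.natAbs).2.2.1 n le_rfl).trans_lt hcb
  have hsep : ε ≤ dist (x 0) (y 0) := (hp 0).2.2.2
  rw [hxy, dist_self] at hsep
  exact hε.not_ge hsep

theorem IsExpansiveConstant.exists_forall_ge_dist_iterate_lt [CompactSpace X]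
    (hb : IsExpansiveConstant f b) (hf : Continuous f) (hsurj : f.Surjective) {c η : ℝ}
    (hcb : c < b) (hη : 0 < η) :
    ∃ N : ℕ, ∀ u v : X, (∀ n, dist (f^[n] u) (f^[n] v) ≤ c) →
      ∀ n ≥ N, dist (f^[n] u) (f^[n] v) < η := by
  obtain ⟨N, hN⟩ := hb.exists_window hf hcb hη
  refine ⟨N, fun u v huv n hn => ?_⟩
  obtain ⟨x, hx, hxu⟩ := exists_isFullOrbit_eq_iterate hsurj u
  obtain ⟨y, hy, hyv⟩ := exists_isFullOrbit_eq_iterate hsurj v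
  -- recentre both orbits at time `n`; the window `[-N, N]` then lies in forward time
  have key := hN _ _ (hx.comp_add_const n) (hy.comp_add_const n) fun j hj => by
    obtain ⟨k, hk⟩ : ∃ k : ℕ, j + n = k := ⟨(j + n).toNat, by omega⟩
    simpa only [hk, hxu, hyv] using huv k
  simpa only [zero_add, hxu, hyv] using key

theorem IsExpansiveConstant.tendsto_dist_iterate_of_shadowing [CompactSpace X]
    (hb : IsExpansiveConstant f b) (hf : Continuous f) (hsurj : f.Surjective)
    (hshad : Shadowing f) {σ : ℕ → X} {y : X}
    (hσ : Tendsto (fun n => dist (f (σ n)) (σ (n + 1))) atTop (𝓝 0))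
    (hy : ∀ n, dist (f^[n] y) (σ n) < b / 3) :
    Tendsto (fun n => dist (f^[n] y) (σ n)) atTop (𝓝 0) := by
  have hb3 : 0 < b / 3 := dist_nonneg.trans_lt (hy 0)
  rw [Metric.tendsto_atTop]
  intro η hη
  obtain ⟨N, hN⟩ :=
    hb.exists_forall_ge_dist_iterate_lt hf hsurj (c := 2 * b / 3) (by linarith) (half_pos hη)
  obtain ⟨δ, hδ, hshadδ⟩ := hshad (min (η / 2) (b / 3)) (lt_min (half_pos hη) hb3)
  obtain ⟨m, hm⟩ := eventually_atTop.1 (hσ.eventually (gt_mem_nhds hδ))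
  -- a tail of `σ` is a `δ`-pseudo-orbit, shadowed by some `z` more tightly than by `y`
  obtain ⟨z, hz⟩ := hshadδ (fun n => σ (n + m)) fun n => by
    simpa only [Nat.add_right_comm] using hm (n + m) (Nat.le_add_left m n)
  have hclose (n : ℕ) : dist (f^[n] (f^[m] y)) (f^[n] z) ≤ 2 * b / 3 := by
    rw [← f.iterate_add_apply]
    linarith [dist_triangle_right (f^[n + m] y) (f^[n] z) (σ (n + m)), hy (n + m), hz n,
      min_le_right (η / 2) (b / 3)]
  refine ⟨N + m, fun n hn => ?_⟩
  obtain ⟨k, rfl⟩ : ∃ k, n = k + m := ⟨n - m, by omega⟩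
  have hyz := hN _ _ hclose k (by omega)
  rw [← f.iterate_add_apply] at hyz
  rw [Real.dist_0_eq_abs, abs_of_nonneg dist_nonneg]
  linarith [dist_triangle (f^[k + m] y) (f^[k] z) (σ (k + m)), hz k, min_le_left (η / 2) (b / 3)]

end Expansive

theorem shadowing_implies_sLimitShadowing {X : Type*} [MetricSpace X] [CompactSpace X]
    (f : X → X) (hf : Continuous f) (hsurj : Function.Surjective f)
    (hexp : CExpansive f) (hshad : Shadowing f) : SLimitShadowing f := by
  obtain ⟨b, hb0, hb⟩ : ∃ b, 0 < b ∧ IsExpansiveConstant f b := hexp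
  intro ε hε
  obtain ⟨δ, hδ, hshadδ⟩ := hshad (min ε (b / 3)) (by positivity)
  refine ⟨δ, hδ, fun σ hσ => ?_, fun σ hσ hσ0 => ?_⟩
  · obtain ⟨y, hy⟩ := hshadδ σ hσ
    exact ⟨y, fun n => (hy n).trans_le (min_le_left _ _)⟩
  · obtain ⟨y, hy⟩ := hshadδ σ hσ
    exact ⟨y, fun n => (hy n).trans_le (min_le_left _ _),
      hb.tendsto_dist_iterate_of_shadowing hf hsurj hshad hσ0
        fun n => (hy n).trans_le (min_le_right _ _)⟩
end

section
/- Let T : [0,1] → [0,1] be the full tent map T(x) = 2x for x ≤ 1/2 and T(x) = 2(1−x) for x ≥ 1/2. There exists λ > 0 such that for every δ < λ, every integer n > 0 and every x, y ∈ [0,1] with |Tⁿ(x) − y| < δ, there is z ∈ [0,1] such that |Tⁱ(x) − Tⁱ(z)| < 2δ for i = 1, ..., n and Tⁿ(z) = y. -/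
noncomputable def tentMap (x : ℝ) : ℝ := if x ≤ 1 / 2 then 2 * x else 2 * (1 - x)

lemma tent_step (x : ℝ) (hx : x ∈ Set.Icc (0:ℝ) 1) (w : ℝ) (hw : w ∈ Set.Icc (0:ℝ) 1) :
    ∃ u ∈ Set.Icc (0:ℝ) 1, tentMap u = w ∧ |x - u| ≤ |tentMap x - w| / 2 := by
  obtain ⟨hx0, hx1⟩ := hx
  obtain ⟨hw0, hw1⟩ := hw
  by_cases hx2 : x ≤ 1 / 2
  · refine ⟨w / 2, ⟨by linarith, by linarith⟩, ?_, ?_⟩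
    · unfold tentMap
      rw [if_pos (by linarith)]
      ring
    · unfold tentMap
      rw [if_pos hx2]
      have h : x - w / 2 = (2 * x - w) / 2 := by ring
      rw [h, abs_div]
      simp [abs_of_nonneg]
  · refine ⟨1 - w / 2, ⟨by linarith, by linarith⟩, ?_, ?_⟩
    · unfold tentMap
      split <;> rename_i h
      · have : w = 1 := by linarith
        rw [this]; ring
      · ring
    · unfold tentMap
      rw [if_neg hx2]
      have h : x - (1 - w / 2) = -((2 * (1 - x) - w) / 2) := by ring
      rw [h, abs_neg, abs_div]
      simp [abs_of_nonneg]

lemma tent_pullback (n : ℕ) (x : ℝ) (hx : x ∈ Set.Icc (0:ℝ) 1) (y : ℝ)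
    (hy : y ∈ Set.Icc (0:ℝ) 1) :
    ∃ z ∈ Set.Icc (0:ℝ) 1, tentMap^[n] z = y ∧
      ∀ i ≤ n, |tentMap^[i] x - tentMap^[i] z| ≤ |tentMap^[n] x - y| := by
  induction n generalizing y with
  | zero => exact ⟨y, hy, rfl, fun i hi => by simp_all⟩
  | succ n ih =>
    obtain ⟨u, hu, hTu, hdist⟩ := tent_step (tentMap^[n] x)
      (by
        have : ∀ m, tentMap^[m] x ∈ Set.Icc (0:ℝ) 1 := by
          intro m
          induction m with
          | zero => simpa using hx
          | succ m ihm =>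
            rw [Function.iterate_succ_apply']
            obtain ⟨h0, h1⟩ := ihm
            revert h0 h1
            generalize tentMap^[m] x = t
            intro h0 h1
            unfold tentMap
            split <;> constructor <;> linarith
        exact this n) y hy
    obtain ⟨z, hz, hTz, hd⟩ := ih u hu
    refine ⟨z, hz, ?_, ?_⟩
    · rw [Function.iterate_succ_apply', hTz, hTu]
    · intro i hi
      have key : |tentMap^[n] x - u| ≤ |tentMap^[n+1] x - y| := by
        rw [Function.iterate_succ_apply']
        have := abs_nonneg (tentMap (tentMap^[n] x) - y)
        linarith [hdist]
      rcases Nat.lt_or_ge i (n+1) with h | h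
      · exact le_trans (hd i (Nat.lt_succ_iff.mp h)) key
      · have : i = n + 1 := le_antisymm hi h
        subst this
        rw [Function.iterate_succ_apply' tentMap n z, hTz, hTu]

theorem tent_reverse_tracking :
    ∃ lam : ℝ, 0 < lam ∧ ∀ δ : ℝ, 0 < δ → δ < lam → ∀ n : ℕ, 0 < n →
      ∀ x ∈ Set.Icc (0 : ℝ) 1, ∀ y ∈ Set.Icc (0 : ℝ) 1,
        |tentMap^[n] x - y| < δ →
        ∃ z ∈ Set.Icc (0 : ℝ) 1,
          (∀ i, 1 ≤ i → i ≤ n → |tentMap^[i] x - tentMap^[i] z| < 2 * δ) ∧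
          tentMap^[n] z = y := by
  refine ⟨1, one_pos, fun δ hδ _ n _ x hx y hy hclose => ?_⟩
  obtain ⟨z, hz, hTz, hd⟩ := tent_pullback n x hx y hy
  exact ⟨z, hz, fun i _ hin => lt_of_le_of_lt (hd i hin) (by linarith), hTz⟩
end

section
/- The full tent map T : [0,1] → [0,1], T(x) = 2x for x ≤ 1/2 and T(x) = 2(1−x) for x ≥ 1/2, has h-shadowing: for every ε > 0 there is δ > 0 such that for every finite sequence x₀, ..., xₘ in [0,1] with |T(xᵢ) − x_{i+1}| < δ for all i < m, there is y ∈ [0,1] with |Tⁱ(y) − xᵢ| < ε for all i < m and Tᵐ(y) = xₘ. -/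
/-- Preimage of `z` under the tent map, chosen on the same branch as `x`. -/
noncomputable def tentPre (x z : ℝ) : ℝ := if x ≤ 1 / 2 then z / 2 else 1 - z / 2

lemma tentPre_mem {x z : ℝ} (hz : z ∈ Set.Icc (0 : ℝ) 1) :
    tentPre x z ∈ Set.Icc (0 : ℝ) 1 := by
  obtain ⟨h0, h1⟩ := hz
  unfold tentPre
  split <;> constructor <;> linarith

lemma tentMap_tentPre {x z : ℝ} (hz : z ∈ Set.Icc (0 : ℝ) 1) :
    tentMap (tentPre x z) = z := by
  obtain ⟨h0, h1⟩ := hz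
  unfold tentPre tentMap
  split
  · rw [if_pos (by linarith)]; ring
  · split
    · linarith
    · ring

lemma tentPre_dist (x z : ℝ) : |tentPre x z - x| ≤ |tentMap x - z| / 2 := by
  unfold tentPre tentMap
  split
  · rw [show z / 2 - x = -((2 * x - z) / 2) by ring, abs_neg, abs_div, abs_two]
  · rw [show 1 - z / 2 - x = (2 * (1 - x) - z) / 2 by ring, abs_div, abs_two]

/-- Backward orbit through preimages, starting from `σ m`. -/
noncomputable def backSeq (σ : ℕ → ℝ) (m : ℕ) : ℕ → ℝ
  | 0 => σ m
  | j + 1 => tentPre (σ (m - j - 1)) (backSeq σ m j)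

theorem tent_hShadowing :
    ∀ ε : ℝ, 0 < ε → ∃ δ : ℝ, 0 < δ ∧ ∀ (m : ℕ) (σ : ℕ → ℝ),
      (∀ i ≤ m, σ i ∈ Set.Icc (0 : ℝ) 1) →
      (∀ i < m, |tentMap (σ i) - σ (i + 1)| < δ) →
      ∃ y ∈ Set.Icc (0 : ℝ) 1,
        (∀ i < m, |tentMap^[i] y - σ i| < ε) ∧ tentMap^[m] y = σ m := by
  intro ε hε
  refine ⟨ε, hε, ?_⟩
  intro m σ hmem hps
  have hwmem : ∀ j, backSeq σ m j ∈ Set.Icc (0 : ℝ) 1 := by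
    intro j
    induction j with
    | zero => exact hmem m le_rfl
    | succ j ih => exact tentPre_mem ih
  have hTw : ∀ j, tentMap (backSeq σ m (j + 1)) = backSeq σ m j :=
    fun j => tentMap_tentPre (hwmem j)
  have hd : ∀ j ≤ m, |backSeq σ m j - σ (m - j)| < ε := by
    intro j hj
    induction j with
    | zero => simpa [backSeq] using hε
    | succ j ih =>
      have hj' : j ≤ m := by omega
      have ih' := ih hj'
      have h1 : |tentMap (σ (m - j - 1)) - σ (m - j - 1 + 1)| < ε :=
        hps (m - j - 1) (by omega)
      have harith : m - j - 1 + 1 = m - j := by omega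
      rw [harith] at h1
      have h2 : |tentPre (σ (m - j - 1)) (backSeq σ m j) - σ (m - j - 1)| ≤
          |tentMap (σ (m - j - 1)) - backSeq σ m j| / 2 := tentPre_dist _ _
      have h3 : |tentMap (σ (m - j - 1)) - backSeq σ m j| ≤
          |tentMap (σ (m - j - 1)) - σ (m - j)| + |σ (m - j) - backSeq σ m j| :=
        abs_sub_le _ _ _
      have h4 : |σ (m - j) - backSeq σ m j| = |backSeq σ m j - σ (m - j)| :=
        abs_sub_comm _ _
      have : |backSeq σ m (j + 1) - σ (m - (j + 1))| =
          |tentPre (σ (m - j - 1)) (backSeq σ m j) - σ (m - j - 1)| := by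
        simp [backSeq, Nat.sub_sub]
      rw [this]
      linarith
  have hiter : ∀ i ≤ m, tentMap^[i] (backSeq σ m m) = backSeq σ m (m - i) := by
    intro i hi
    induction i with
    | zero => simp
    | succ i ih =>
      have hi' : i ≤ m := by omega
      rw [Function.iterate_succ_apply', ih hi',
        show m - i = (m - i - 1) + 1 by omega, hTw, Nat.sub_sub]
  refine ⟨backSeq σ m m, hwmem m, ?_, ?_⟩
  · intro i hi
    rw [hiter i hi.le]
    have := hd (m - i) (by omega)
    rwa [show m - (m - i) = i by omega] at this
  · rw [hiter m le_rfl]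
    simp [backSeq]
end

section
/- Let (X,d) be a compact metric space and f : X → X continuous. If f has h-shadowing, then f has shadowing. -/
theorem hShadowing_implies_shadowing {X : Type*} [MetricSpace X] [CompactSpace X]
    (f : X → X) (hf : Continuous f) (h : HShadowing f) : Shadowing f := by
  intro ε hε
  obtain ⟨δ, hδ, H⟩ := h (ε / 2) (half_pos hε)
  refine ⟨δ, hδ, fun σ hσ => ?_⟩
  choose y hy1 _ using fun m => H m σ (fun i _ => hσ i)
  obtain ⟨a, -, φ, hφ, ha⟩ := isCompact_univ.tendsto_subseq (x := y) (fun n => Set.mem_univ _)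
  refine ⟨a, fun n => ?_⟩
  have hlim : Filter.Tendsto (fun k => dist (f^[n] (y (φ k))) (σ n)) Filter.atTop
      (nhds (dist (f^[n] a) (σ n))) :=
    ((hf.iterate n).continuousAt.tendsto.comp ha).dist tendsto_const_nhds
  have hle : dist (f^[n] a) (σ n) ≤ ε / 2 := by
    apply le_of_tendsto hlim
    filter_upwards [hφ.tendsto_atTop.eventually_ge_atTop (n + 1)] with k hk
    exact (hy1 (φ k) n (lt_of_lt_of_le (Nat.lt_succ_self n) hk)).le
  linarith
end

section
/- Let (X,d) be a compact metric space, f : X → X continuous, and Λ ⊆ X a closed set. Suppose Λ is internally chain transitive, f has h-shadowing on Λ, and f is open on a neighbourhood of Λ. Then Λ is dynamically indecomposable. -/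
def HShadowingOn {X : Type*} [MetricSpace X] (f : X → X) (Λ : Set X) : Prop :=
  ∀ ε : ℝ, 0 < ε → ∃ δ : ℝ, 0 < δ ∧ ∀ (m : ℕ) (σ : ℕ → X),
    (∀ i ≤ m, σ i ∈ Λ) → (∀ i < m, dist (f (σ i)) (σ (i + 1)) < δ) →
    ∃ y : X, (∀ i < m, dist (f^[i] y) (σ i) < ε) ∧ f^[m] y = σ m

def DynamicallyIndecomposable {X : Type*} [MetricSpace X] (f : X → X) (Λ : Set X) : Prop :=
  ∀ ε : ℝ, 0 < ε → ∀ x ∈ Λ, ∀ y ∈ Λ, ∀ U V : Set X,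
    IsOpen U → IsOpen V → x ∈ U → y ∈ V →
    ∃ m : ℕ, 0 < m ∧ ∃ J : ℕ → Set X,
      (∀ i ≤ m, J i = closure (interior (J i))) ∧
      x ∈ interior (J 0) ∧ J 0 ⊆ U ∧
      (∀ i < m, J (i + 1) ⊆ f '' (J i)) ∧
      (∀ i ≤ m, J i ⊆ Metric.thickening ε Λ) ∧
      y ∈ interior (J m) ∧ J m ⊆ V

open Metric Set Function Topology

lemma IsOpen.closure_interior_closure {X : Type*} [TopologicalSpace X] {O : Set X}
    (hO : IsOpen O) : closure (interior (closure O)) = closure O := by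
  rw [← hO.interior_eq, closure_interior_idem]

lemma closure_subset_image_closure_of_subset_image {X Y : Type*} [TopologicalSpace X]
    [CompactSpace X] [TopologicalSpace Y] [T2Space Y] {f : X → Y} (hf : Continuous f)
    {s : Set X} {t : Set Y} (h : t ⊆ f '' s) : closure t ⊆ f '' closure s :=
  (closure_mono h).trans (hf.isClosedMap.closure_image_eq_of_continuous hf s).subset

lemma isOpen_image_of_subset {X Y : Type*} [TopologicalSpace X] [TopologicalSpace Y]
    {f : X → Y} {W O : Set X} (hW : ∀ x ∈ W, ∀ U ∈ 𝓝 x, f x ∈ interior (f '' U))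
    (hO : IsOpen O) (hOW : O ⊆ W) : IsOpen (f '' O) := by
  rw [← subset_interior_iff_isOpen]
  rintro _ ⟨z, hz, rfl⟩
  exact hW z (hOW hz) O (hO.mem_nhds hz)

lemma isOpen_image_iterate_of_subset {X : Type*} [TopologicalSpace X] {f : X → X} {W O : Set X}
    (hW : ∀ x ∈ W, ∀ U ∈ 𝓝 x, f x ∈ interior (f '' U)) (hO : IsOpen O) {m : ℕ}
    (hOW : ∀ i < m, f^[i] '' O ⊆ W) : ∀ i ≤ m, IsOpen (f^[i] '' O) := by
  intro i hi
  induction i with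
  | zero => simpa using hO
  | succ i ih =>
    rw [iterate_succ', image_comp]
    exact isOpen_image_of_subset hW (ih (by omega)) (hOW i (by omega))

lemma UniformContinuous.exists_pos_forall_dist_iterate_lt {X : Type*} [PseudoMetricSpace X]
    {f : X → X} (hf : UniformContinuous f) (m : ℕ) {ε : ℝ} (hε : 0 < ε) :
    ∃ r > 0, ∀ z w : X, dist z w < r → ∀ i ≤ m, dist (f^[i] z) (f^[i] w) < ε := by
  have hunif : UniformContinuous fun z (i : Fin (m + 1)) => f^[i] z :=
    uniformContinuous_pi.mpr fun i => UniformContinuous.iterate f i hf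
  obtain ⟨r, hr, hdist⟩ := Metric.uniformContinuous_iff.mp hunif ε hε
  exact ⟨r, hr, fun z w hzw i hi => (dist_pi_lt_iff hε).mp (hdist hzw) ⟨i, by omega⟩⟩

lemma exists_shadowing_tube {X : Type*} [MetricSpace X] [CompactSpace X] {f : X → X}
    (hf : Continuous f) {Λ : Set X} (hict : InternallyChainTransitive f Λ)
    (hshad : HShadowingOn f Λ) {x y : X} (hx : x ∈ Λ) (hy : y ∈ Λ) {ρ : ℝ} (hρ : 0 < ρ) :
    ∃ m, 0 < m ∧ ∃ σ : ℕ → X, σ 0 = x ∧ σ m = y ∧ (∀ i ≤ m, σ i ∈ Λ) ∧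
      ∃ w r, 0 < r ∧ f^[m] w = y ∧ ∀ i ≤ m, f^[i] '' ball w r ⊆ ball (σ i) ρ := by
  obtain ⟨δ, hδ, hδshad⟩ := hshad (ρ / 2) (half_pos hρ)
  obtain ⟨m, hm, σ, hσ0, hσm, hσΛ, hσjump⟩ := hict x hx y hy δ hδ
  obtain ⟨w, hwσ, hwm⟩ := hδshad m σ hσΛ hσjump
  obtain ⟨r, hr, hrdist⟩ := (CompactSpace.uniformContinuous_of_continuous hf)
    |>.exists_pos_forall_dist_iterate_lt m (half_pos hρ)
  have hwσ' : ∀ i ≤ m, dist (f^[i] w) (σ i) < ρ / 2 := by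
    intro i hi
    rcases hi.lt_or_eq with hi | rfl
    · exact hwσ i hi
    · simpa [hwm] using half_pos hρ
  refine ⟨m, hm, σ, hσ0, hσm, hσΛ, w, r, hr, hwm.trans hσm, ?_⟩
  rintro i hi _ ⟨z, hz, rfl⟩
  calc dist (f^[i] z) (σ i) ≤ dist (f^[i] z) (f^[i] w) + dist (f^[i] w) (σ i) :=
        dist_triangle _ _ _
    _ < ρ / 2 + ρ / 2 := add_lt_add (hrdist z w hz i hi) (hwσ' i hi)
    _ = ρ := add_halves ρ

lemma exists_regularClosed_chain_of_tube {X : Type*} [MetricSpace X] [CompactSpace X]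
    {f : X → X} (hf : Continuous f) {W : Set X}
    (hW : ∀ x ∈ W, ∀ U ∈ 𝓝 x, f x ∈ interior (f '' U)) {m : ℕ} {σ : ℕ → X} {w : X}
    {r ρ : ℝ} (hr : 0 < r) (hρ : 0 < ρ) (hwm : f^[m] w = σ m)
    (htube : ∀ i ≤ m, f^[i] '' ball w r ⊆ ball (σ i) ρ) (hballW : ∀ i < m, ball (σ i) ρ ⊆ W) :
    ∃ J : ℕ → Set X, (∀ i ≤ m, J i = closure (interior (J i))) ∧ σ 0 ∈ interior (J 0) ∧
      (∀ i < m, J (i + 1) ⊆ f '' J i) ∧ (∀ i ≤ m, J i ⊆ closedBall (σ i) ρ) ∧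
      σ m ∈ interior (J m) := by
  -- The ball around `σ 0` replaces the ball around `w` at time `0`, so that `σ 0` is interior.
  set O : ℕ → Set X := fun i => if i = 0 then ball (σ 0) ρ else f^[i] '' ball w r
  have hO_ball : ∀ i ≤ m, O i ⊆ ball (σ i) ρ := by
    rintro (_ | i) hi
    · exact subset_rfl
    · exact htube (i + 1) hi
  have hO_open : ∀ i ≤ m, IsOpen (O i) := by
    have himage := isOpen_image_iterate_of_subset hW isOpen_ball
      fun i hi => (htube i hi.le).trans (hballW i hi)
    rintro (_ | i) hi
    · exact isOpen_ball
    · exact himage (i + 1) hi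
  have hO_succ : ∀ i, O (i + 1) ⊆ f '' O i := by
    rintro (_ | i)
    · show f^[1] '' ball w r ⊆ f '' ball (σ 0) ρ
      exact image_mono (by simpa using htube 0 m.zero_le)
    · show f^[i + 2] '' ball w r ⊆ f '' (f^[i + 1] '' ball w r)
      rw [iterate_succ', image_comp]
  have hσm : σ m ∈ O m := by
    rcases m with _ | m
    · exact mem_ball_self hρ
    · exact ⟨w, mem_ball_self hr, hwm⟩
  refine ⟨fun i => closure (O i), fun i hi => (hO_open i hi).closure_interior_closure.symm,
    isOpen_ball.subset_interior_closure (mem_ball_self hρ),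
    fun i _ => closure_subset_image_closure_of_subset_image hf (hO_succ i),
    fun i hi => closure_minimal ((hO_ball i hi).trans ball_subset_closedBall) isClosed_closedBall,
    (hO_open m le_rfl).subset_interior_closure hσm⟩

theorem ict_hShadowing_open_implies_dynIndec {X : Type*} [MetricSpace X] [CompactSpace X]
    (f : X → X) (hf : Continuous f) (Λ : Set X) (hΛc : IsClosed Λ)
    (hict : InternallyChainTransitive f Λ)
    (hshad : HShadowingOn f Λ)
    (hopen : ∃ W : Set X, IsOpen W ∧ Λ ⊆ W ∧
      ∀ x ∈ W, ∀ U ∈ nhds x, f x ∈ interior (f '' U)) :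
    DynamicallyIndecomposable f Λ := by
  intro ε hε x hx y hy U V hU hV hxU hyV
  obtain ⟨W, hWo, hΛW, hfW⟩ := hopen
  obtain ⟨η, hη, hηW⟩ := hΛc.isCompact.exists_cthickening_subset_open hWo hΛW
  obtain ⟨ρx, hρx, hxU⟩ := nhds_basis_closedBall.mem_iff.mp (hU.mem_nhds hxU)
  obtain ⟨ρy, hρy, hyV⟩ := nhds_basis_closedBall.mem_iff.mp (hV.mem_nhds hyV)
  set ρ := min (min ρx ρy) (min (ε / 2) η)
  have hρ : 0 < ρ := by positivity
  obtain ⟨m, hm, σ, hσ0, hσm, hσΛ, w, r, hr, hwm, htube⟩ :=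
    exists_shadowing_tube hf hict hshad hx hy hρ
  have hcthickening : ∀ i ≤ m, closedBall (σ i) ρ ⊆ cthickening ρ Λ :=
    fun i hi => closedBall_subset_cthickening (hσΛ i hi) ρ
  obtain ⟨J, hJreg, hJ0, hJchain, hJball, hJm⟩ :=
    exists_regularClosed_chain_of_tube hf hfW hr hρ (hwm.trans hσm.symm) htube fun i hi =>
      ball_subset_closedBall.trans <| (hcthickening i hi.le).trans <|
        (cthickening_mono (by simp [ρ]) Λ).trans hηW
  refine ⟨m, hm, J, hJreg, hσ0 ▸ hJ0, ?_, hJchain, fun i hi => ?_, hσm ▸ hJm, ?_⟩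
  · exact (hσ0 ▸ hJball 0 m.zero_le).trans <|
      (closedBall_subset_closedBall (by simp [ρ])).trans hxU
  · exact (hJball i hi).trans <| (hcthickening i hi).trans <|
      cthickening_subset_thickening' hε
        (min_lt_of_right_lt (min_lt_of_left_lt (half_lt_self hε))) Λ
  · exact (hσm ▸ hJball m le_rfl).trans <|
      (closedBall_subset_closedBall (by simp [ρ])).trans hyV
end

section
/- Let (X,d) be a compact metric space and f : X → X continuous. A closed nonempty set Λ ⊆ X is internally chain transitive if and only if Λ is the ω-limit set of some asymptotic pseudo-orbit of f in X. -/
open Filter Topology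

/-!
Forward direction: take a sequence `q` in `Λ` visiting every point of a countable dense subset
infinitely often, join `q n` to `q (n + 1)` by a `1/(n+1)`-chain inside `Λ` and concatenate the
chains. The result is an asymptotic pseudo-orbit in the closed set `Λ` whose cluster points include
those of `q`, i.e. all of `Λ`.

Backward direction: by compactness an asymptotic pseudo-orbit `σ` eventually stays `δ`-close to its
ω-limit set `Λ`. Shadowing a late stretch of `σ` from near `x` to near `y` by points of `Λ` gives a
chain in `Λ`, whose jumps are small by uniform continuity of `f`.
-/

open Set TopologicalSpace

theorem iInter_closure_image_Ici_eq_setOf_mapClusterPt {X : Type*} [TopologicalSpace X]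
    (σ : ℕ → X) : ⋂ k : ℕ, closure (σ '' Ici k) = {x | MapClusterPt x atTop σ} :=
  ext fun _ => mem_iInter.trans mapClusterPt_atTop_iff_forall_mem_closure.symm

theorem StrictMono.exists_apply_le_lt_apply_succ {S : ℕ → ℕ} (hS : StrictMono S) (hS0 : S 0 = 0)
    (k : ℕ) : ∃ n, S n ≤ k ∧ k < S (n + 1) := by
  classical
  have hex : ∃ n, k < S (n + 1) := ⟨k, (Nat.lt_succ_self k).trans_le (hS.id_le _)⟩
  refine ⟨Nat.find hex, ?_, Nat.find_spec hex⟩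
  rcases h : Nat.find hex with _ | n
  · simp [hS0]
  · exact not_lt.1 (Nat.find_min hex (by omega))

theorem exists_eqOn_Icc_of_strictMono {X : Type*} {S : ℕ → ℕ} (hS : StrictMono S)
    (hS0 : S 0 = 0) (c : ℕ → ℕ → X) (hc : ∀ n, c n (S (n + 1)) = c (n + 1) (S (n + 1))) :
    ∃ τ : ℕ → X, ∀ n, EqOn τ (c n) (Icc (S n) (S (n + 1))) := by
  choose b hb using hS.exists_apply_le_lt_apply_succ hS0
  have hb_eq : ∀ {n k}, S n ≤ k → k < S (n + 1) → b k = n := fun {n k} h₁ h₂ =>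
    le_antisymm (Nat.lt_succ_iff.1 (hS.lt_iff_lt.1 ((hb k).1.trans_lt h₂)))
      (Nat.lt_succ_iff.1 (hS.lt_iff_lt.1 (h₁.trans_lt (hb k).2)))
  refine ⟨fun k => c (b k) k, fun n k hk => ?_⟩
  rcases hk.2.lt_or_eq with hlt | rfl
  · simp only [hb_eq hk.1 hlt]
  · simp only [hb_eq le_rfl (hS (Nat.lt_succ_self (n + 1))), hc]

theorem TopologicalSpace.IsSeparable.exists_seq_subset_mapClusterPt {X : Type*}
    [TopologicalSpace X] [PseudoMetrizableSpace X] {s : Set X} (hs : IsSeparable s)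
    (hne : s.Nonempty) : ∃ q : ℕ → X, (∀ n, q n ∈ s) ∧ s ⊆ {x | MapClusterPt x atTop q} := by
  obtain ⟨t, hts, htc, hst⟩ := hs.exists_countable_dense_subset
  have htne : t.Nonempty := closure_nonempty_iff.1 (hne.mono hst)
  obtain ⟨p, rfl⟩ := htc.exists_eq_range htne
  refine ⟨fun n => p n.unpair.1, fun n => hts (mem_range_self _),
    hst.trans (closure_minimal ?_ isClosed_setOfPred_clusterPt)⟩
  -- `p j` recurs along the indices `Nat.pair j k`, `k ∈ ℕ`.
  rintro _ ⟨j, rfl⟩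
  refine MapClusterPt.of_comp (tendsto_atTop_mono (Nat.right_le_pair j) tendsto_id) ?_
  simp only [Function.comp_def, Nat.unpair_pair]
  exact tendsto_const_nhds.mapClusterPt

theorem eventually_mem_of_mapClusterPt_subset {ι X : Type*} [TopologicalSpace X] [CompactSpace X]
    {l : Filter ι} {u : ι → X} {U : Set X} (hU : IsOpen U) (h : {x | MapClusterPt x l u} ⊆ U) :
    ∀ᶠ n in l, u n ∈ U := by
  by_contra hnot
  obtain ⟨x, hxU, hx⟩ :=
    hU.isClosed_compl.isCompact.exists_mapClusterPt_of_frequently (not_eventually.1 hnot)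
  exact hxU (h hx)

theorem InternallyChainTransitive.exists_asymptoticPseudoOrbit_through {X : Type*} [MetricSpace X]
    {f : X → X} {Λ : Set X} (h : InternallyChainTransitive f Λ) {q : ℕ → X}
    (hq : ∀ n, q n ∈ Λ) :
    ∃ τ : ℕ → X, ∃ S : ℕ → ℕ, StrictMono S ∧ τ ∘ S = q ∧ (∀ k, τ k ∈ Λ) ∧
      Tendsto (fun k => dist (f (τ k)) (τ (k + 1))) atTop (𝓝 0) := by
  choose m hm s hs0 hsm hsΛ hsd using fun n =>
    h (q n) (hq n) (q (n + 1)) (hq (n + 1)) (1 / ((n : ℝ) + 1)) Nat.one_div_pos_of_nat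
  set S : ℕ → ℕ := fun n => ∑ i ∈ Finset.range n, m i
  have hS0 : S 0 = 0 := Finset.sum_range_zero _
  have hS_succ (n : ℕ) : S (n + 1) = S n + m n := Finset.sum_range_succ _ _
  have hS : StrictMono S := strictMono_nat_of_lt_succ fun n => by rw [hS_succ]; have := hm n; omega
  obtain ⟨τ, hτ⟩ := exists_eqOn_Icc_of_strictMono hS hS0 (fun n k => s n (k - S n))
    fun n => by simp [hS_succ, hsm, hs0]
  have hτ_block (k : ℕ) : ∃ n, S n ≤ k ∧ k < S (n + 1) ∧ τ k = s n (k - S n) := by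
    obtain ⟨n, h₁, h₂⟩ := hS.exists_apply_le_lt_apply_succ hS0 k
    exact ⟨n, h₁, h₂, hτ n ⟨h₁, h₂.le⟩⟩
  have hτ_step (N k : ℕ) (hk : S N ≤ k) : dist (f (τ k)) (τ (k + 1)) < 1 / ((N : ℝ) + 1) := by
    obtain ⟨n, h₁, h₂, hτk⟩ := hτ_block k
    have := hS_succ n
    have hNn : N ≤ n := Nat.lt_succ_iff.1 (hS.lt_iff_lt.1 (hk.trans_lt h₂))
    have hτk' : τ (k + 1) = s n (k - S n + 1) :=
      (hτ n ⟨by omega, h₂⟩).trans (congrArg (s n) (by omega))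
    calc dist (f (τ k)) (τ (k + 1)) < 1 / ((n : ℝ) + 1) := by
          rw [hτk, hτk']; exact hsd n _ (by omega)
      _ ≤ 1 / ((N : ℝ) + 1) := by gcongr
  refine ⟨τ, S, hS, funext fun n => ?_, fun k => ?_, ?_⟩
  · simpa [hs0] using hτ n ⟨le_rfl, (hS n.lt_succ_self).le⟩
  · obtain ⟨n, h₁, h₂, hτk⟩ := hτ_block k
    exact hτk ▸ hsΛ n _ (by rw [hS_succ] at h₂; omega)
  · refine Metric.tendsto_atTop.2 fun ε hε => ?_
    obtain ⟨N, hN⟩ := exists_nat_one_div_lt hε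
    refine ⟨S N, fun k hk => ?_⟩
    rw [Real.dist_0_eq_abs, abs_of_nonneg dist_nonneg]
    exact (hτ_step N k hk).trans hN

theorem internallyChainTransitive_setOf_mapClusterPt {X : Type*} [MetricSpace X] [CompactSpace X]
    {f : X → X} (hf : Continuous f) {σ : ℕ → X}
    (hσ : Tendsto (fun n => dist (f (σ n)) (σ (n + 1))) atTop (𝓝 0)) :
    InternallyChainTransitive f {x | MapClusterPt x atTop σ} := by
  set Λ := {x | MapClusterPt x atTop σ}
  intro x hx y hy ε hε
  obtain ⟨δ₀, hδ₀, hfδ₀⟩ := Metric.uniformContinuous_iff.1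
    (CompactSpace.uniformContinuous_of_continuous hf) (ε / 3) (by positivity)
  set δ := min δ₀ (ε / 3)
  have hδ : 0 < δ := lt_min hδ₀ (by positivity)
  obtain ⟨N, hN⟩ := eventually_atTop.1 <| (hσ.eventually (gt_mem_nhds hδ)).and <|
    eventually_mem_of_mapClusterPt_subset Metric.isOpen_thickening
      (Metric.self_subset_thickening hδ Λ)
  obtain ⟨n₁, hn₁, hσx⟩ : ∃ n ≥ N, dist (σ n) x < δ :=
    frequently_atTop.1 (hx.frequently (Metric.ball_mem_nhds x hδ)) N
  obtain ⟨n₂, hn₂, hσy⟩ : ∃ n ≥ n₁ + 1, dist (σ n) y < δ :=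
    frequently_atTop.1 (hy.frequently (Metric.ball_mem_nhds y hδ)) (n₁ + 1)
  choose w hwΛ hw using fun i => Metric.mem_thickening_iff.1 (hN (n₁ + i) (by omega)).2
  -- The chain: `x`, then the shadows in `Λ` of `σ (n₁ + i)`, and finally `y`.
  set c := Function.update (Function.update w 0 x) (n₂ - n₁) y
  have hc (i : ℕ) (hi : i ≤ n₂ - n₁) : c i ∈ Λ ∧ dist (σ (n₁ + i)) (c i) < δ := by
    simp only [c, Function.update_apply]
    split_ifs with h₂ h₀
    · subst h₂; rw [Nat.add_sub_cancel' (by omega)]; exact ⟨hy, hσy⟩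
    · subst h₀; exact ⟨hx, hσx⟩
    · exact ⟨hwΛ i, hw i⟩
  refine ⟨n₂ - n₁, by omega, c, ?_, by simp [c], fun i hi => (hc i hi).1, fun i hi => ?_⟩
  · simp [c, show 0 ≠ n₂ - n₁ by omega]
  have h₁ := (hc i hi.le).2
  have h₂ : dist (σ (n₁ + i + 1)) (c (i + 1)) < δ := (hc (i + 1) hi).2
  have h₃ := (hN (n₁ + i) (by omega)).1
  have h₄ := hfδ₀ ((dist_comm _ _).trans_lt (h₁.trans_le (min_le_left _ _)))
  have hδε : δ ≤ ε / 3 := min_le_right _ _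
  calc dist (f (c i)) (c (i + 1))
      ≤ dist (f (c i)) (f (σ (n₁ + i))) + dist (f (σ (n₁ + i))) (σ (n₁ + i + 1))
        + dist (σ (n₁ + i + 1)) (c (i + 1)) := dist_triangle4 _ _ _ _
    _ < ε := by linarith

theorem ict_iff_omegaLimit_of_asymptotic_pseudo_orbit {X : Type*} [MetricSpace X]
    [CompactSpace X] (f : X → X) (hf : Continuous f) (Λ : Set X)
    (hΛc : IsClosed Λ) (hne : Λ.Nonempty) :
    InternallyChainTransitive f Λ ↔
      ∃ σ : ℕ → X, Tendsto (fun n => dist (f (σ n)) (σ (n + 1))) atTop (𝓝 0) ∧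
        Λ = ⋂ k : ℕ, closure (σ '' Set.Ici k) := by
  simp only [iInter_closure_image_Ici_eq_setOf_mapClusterPt]
  constructor
  · intro hict
    obtain ⟨q, hqΛ, hΛq⟩ :=
      (IsSeparable.of_separableSpace Λ).exists_seq_subset_mapClusterPt hne
    obtain ⟨τ, S, hS, rfl, hτΛ, hτ⟩ := hict.exists_asymptoticPseudoOrbit_through hqΛ
    refine ⟨τ, hτ, subset_antisymm (fun x hx => (hΛq hx).of_comp hS.tendsto_atTop) fun x hx =>
      hΛc.mem_of_mapClusterPt hx (Eventually.of_forall hτΛ)⟩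
  · rintro ⟨σ, hσ, rfl⟩
    exact internallyChainTransitive_setOf_mapClusterPt hf hσ
end
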